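/- arXiv:1911.10513 — 2 statements merged into one kernel-verified Lean document; each statement's English description precedes it below -/
import Mathlib

section
/- For finite-dimensional right A-modules M₁ and M₂: f_{M₁⊕M₂}(δ) = f_{M₁}(δ) + f_{M₂}(δ) for all δ ∈ ℤ^n, and consequently N(M₁⊕M₂) equals the Minkowski sum N(M₁) + N(M₂). Moreover, if L is a submodule of M = M₁⊕M₂ whose dimension vector is an extreme point of N(M), then L = (L∩M₁) ⊕ (L∩M₂), and dim(L∩Mᵢ) is an extreme point of N(Mᵢ) for i = 1, 2. -/
/-!  Common setup: tropical F-polynomials and general presentations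
for a finite-dimensional basic algebra `A` over `k`, following Fei,
"Tropical F-polynomials and general presentations".
All modules are *right* `A`-modules, encoded as left `Aᵐᵒᵖ`-modules. -/

namespace TropGP

open Module MulOpposite

section Defs

variable (k : Type) [Field k]
variable (A : Type) [Ring A] [Algebra k A]

/-- The right regular `A`-module structure on `A` is compatible with the `k`-action. -/
instance instTowerOpA : IsScalarTower k Aᵐᵒᵖ A :=
  ⟨fun c b x => by
    rw [MulOpposite.smul_eq_mul_unop, MulOpposite.smul_eq_mul_unop, MulOpposite.unop_smul,
      Algebra.mul_smul_comm]⟩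

/-- Shortcut instance: scalars of `k` commute with the right `A`-action. -/
instance (priority := 5000) instSMulCommOpK (M : Type) [AddCommGroup M] [Module k M]
    [Module Aᵐᵒᵖ M] [IsScalarTower k Aᵐᵒᵖ M] : SMulCommClass Aᵐᵒᵖ k M :=
  IsScalarTower.to_smulCommClass'

variable {n : ℕ} (e : Fin n → A)

/-- Pairing of a weight vector with an integral (dimension) vector. -/
def pz (δ β : Fin n → ℤ) : ℤ := ∑ i, δ i * β i

/-- Pairing of an integral weight vector with a real vector. -/
def przr (δ : Fin n → ℤ) (γ : Fin n → ℝ) : ℝ := ∑ i, (δ i : ℝ) * γ i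

/-- Pairing of two real vectors. -/
def prr (δ γ : Fin n → ℝ) : ℝ := ∑ i, δ i * γ i

variable (M : Type) [AddCommGroup M] [Module k M] [Module Aᵐᵒᵖ M] [IsScalarTower k Aᵐᵒᵖ M]

/-- Right multiplication by `e i`, as a `k`-linear endomorphism of a right `A`-module. -/
noncomputable def rmul (i : Fin n) : M →ₗ[k] M where
  toFun x := op (e i) • x
  map_add' x y := smul_add _ x y
  map_smul' c x := smul_comm _ c x

/-- The dimension vector: `i ↦ dim_k (M eᵢ)`. -/
noncomputable def dimVec : Fin n → ℤ :=
  fun i => (finrank k (LinearMap.range (rmul k A e M i)) : ℤ)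

/-- The real dimension vector. -/
noncomputable def dimVecR : Fin n → ℝ :=
  fun i => (finrank k (LinearMap.range (rmul k A e M i)) : ℝ)

/-- The tropical F-polynomial: `f_M(δ) = max { δ(dim L) : L ⊆ M }`. -/
noncomputable def tropF (δ : Fin n → ℤ) : ℤ :=
  sSup (Set.range fun L : Submodule Aᵐᵒᵖ M => pz δ (dimVec k A e L))

/-- The dual tropical F-polynomial: `f̌_M(δ) = max { δ(dim N) : M ↠ N }`. -/
noncomputable def tropCheck (δ : Fin n → ℤ) : ℤ :=
  sSup (Set.range fun L : Submodule Aᵐᵒᵖ M => pz δ (dimVec k A e (M ⧸ L)))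

/-- The Newton polytope of `M`: the convex hull of dimension vectors of submodules. -/
noncomputable def newton : Set (Fin n → ℝ) :=
  convexHull ℝ {x | ∃ L : Submodule Aᵐᵒᵖ M, x = dimVecR k A e L}

/-- The dual Newton polytope of `M`: convex hull of dimension vectors of quotients. -/
noncomputable def newtonCheck : Set (Fin n → ℝ) :=
  convexHull ℝ {x | ∃ L : Submodule Aᵐᵒᵖ M, x = dimVecR k A e (M ⧸ L)}

/-- King's `δ`-semistability. -/
def IsSemistable (δ : Fin n → ℤ) : Prop :=
  pz δ (dimVec k A e M) = 0 ∧ ∀ L : Submodule Aᵐᵒᵖ M, pz δ (dimVec k A e L) ≤ 0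

/-- `δ`-semistability for a real weight. -/
def IsSemistableR (δ : Fin n → ℝ) : Prop :=
  prr δ (dimVecR k A e M) = 0 ∧ ∀ L : Submodule Aᵐᵒᵖ M, prr δ (dimVecR k A e L) ≤ 0

/-- `δ`-stability. -/
def IsStable (δ : Fin n → ℤ) : Prop :=
  pz δ (dimVec k A e M) = 0 ∧
    ∀ L : Submodule Aᵐᵒᵖ M, L ≠ ⊥ → L ≠ ⊤ → pz δ (dimVec k A e L) < 0

section HomE

variable {P Q : Type} [AddCommGroup P] [Module Aᵐᵒᵖ P] [AddCommGroup Q] [Module Aᵐᵒᵖ Q]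

/-- The `k`-linear map `Hom_A(Q, M) → Hom_A(P, M)` induced by `d : P → Q`. -/
noncomputable def homMap (d : P →ₗ[Aᵐᵒᵖ] Q) : (Q →ₗ[Aᵐᵒᵖ] M) →ₗ[k] (P →ₗ[Aᵐᵒᵖ] M) where
  toFun f := f ∘ₗ d
  map_add' f g := LinearMap.add_comp _ _ _
  map_smul' c f := LinearMap.smul_comp _ _ _

/-- `dim_k Hom(d, M)`: the kernel of the induced map. -/
noncomputable def homNum (d : P →ₗ[Aᵐᵒᵖ] Q) : ℕ :=
  finrank k (LinearMap.ker (homMap k A M d))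

/-- `dim_k E(d, M)`: the cokernel of the induced map. -/
noncomputable def eNum (d : P →ₗ[Aᵐᵒᵖ] Q) : ℕ :=
  finrank k ((P →ₗ[Aᵐᵒᵖ] M) ⧸ LinearMap.range (homMap k A M d))

end HomE

/-- The indecomposable projective right module `e i · A`. -/
abbrev projP (i : Fin n) : Submodule Aᵐᵒᵖ A := Submodule.span Aᵐᵒᵖ {e i}

/-- The projective right module `P(β) = ⊕ᵢ (eᵢA)^{β i}`. -/
abbrev PP (β : Fin n → ℕ) : Type := Π i : Fin n, Fin (β i) → projP A e i

/-- The weight condition `β₊ - β₋ = δ`. -/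
def HasWt (βm βp : Fin n → ℕ) (δ : Fin n → ℤ) : Prop :=
  ∀ i, (βp i : ℤ) - (βm i : ℤ) = δ i

/-- The cokernel of a projective presentation. -/
abbrev Coker {βm βp : Fin n → ℕ} (d : PP A e βm →ₗ[Aᵐᵒᵖ] PP A e βp) : Type :=
  PP A e βp ⧸ LinearMap.range d

/-- `hom(δ, M)`: min of `dim_k Hom(d,M)` over projective presentations `d` of weight `δ`. -/
noncomputable def homWt (δ : Fin n → ℤ) : ℕ :=
  sInf {m : ℕ | ∃ (βm βp : Fin n → ℕ) (d : PP A e βm →ₗ[Aᵐᵒᵖ] PP A e βp),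
    HasWt βm βp δ ∧ m = homNum k A M d}

/-- `e(δ, M)`: min of `dim_k E(d,M)` over projective presentations `d` of weight `δ`. -/
noncomputable def eWt (δ : Fin n → ℤ) : ℕ :=
  sInf {m : ℕ | ∃ (βm βp : Fin n → ℕ) (d : PP A e βm →ₗ[Aᵐᵒᵖ] PP A e βp),
    HasWt βm βp δ ∧ m = eNum k A M d}

/-- The indecomposable left module `A · e i`. -/
abbrev projL (i : Fin n) : Submodule A A := Submodule.span A {e i}

section DualMod

variable (V : Type) [AddCommGroup V] [Module k V] [Module A V] [IsScalarTower k A V]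

/-- Left multiplication by `a` as a `k`-linear endomorphism of a left module. -/
noncomputable def lact (a : A) : V →ₗ[k] V where
  toFun x := a • x
  map_add' x y := smul_add a x y
  map_smul' c x := smul_comm a c x

/-- The right `A`-action on the `k`-dual of a left `A`-module. -/
noncomputable instance dualSMul : SMul Aᵐᵒᵖ (V →ₗ[k] k) :=
  ⟨fun a f => f ∘ₗ lact k A V a.unop⟩

@[simp] lemma dual_smul_apply (a : Aᵐᵒᵖ) (f : V →ₗ[k] k) (x : V) :
    (a • f) x = f (a.unop • x) := rfl

/-- The `k`-dual of a left `A`-module is a right `A`-module. -/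
noncomputable instance dualModule : Module Aᵐᵒᵖ (V →ₗ[k] k) :=
  { dualSMul k A V with
    one_smul := fun f => by ext x; simp
    mul_smul := fun a b f => by ext x; simp [mul_smul]
    smul_zero := fun a => by ext x; simp
    smul_add := fun a f g => by ext x; simp
    add_smul := fun a b f => by ext x; simp [add_smul]
    zero_smul := fun f => by ext x; simp }

instance dualSMulComm : SMulCommClass Aᵐᵒᵖ k (V →ₗ[k] k) :=
  ⟨fun a c f => by ext x; simp⟩

instance dualTower : IsScalarTower k Aᵐᵒᵖ (V →ₗ[k] k) :=
  ⟨fun c a f => by ext x; simp [MulOpposite.unop_smul, smul_assoc]⟩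

end DualMod

/-- The indecomposable injective right module `Iᵢ = D(A eᵢ)`,
the `k`-dual of the left module `A eᵢ`. -/
abbrev IP (i : Fin n) : Type := (projL A e i) →ₗ[k] k

/-- The injective right module `I(β) = ⊕ᵢ Iᵢ^{β i}`. -/
abbrev IM (β : Fin n → ℕ) : Type := Π i : Fin n, Fin (β i) → IP k A e i

section PostMap

variable {I J : Type} [AddCommGroup I] [Module k I] [Module Aᵐᵒᵖ I] [IsScalarTower k Aᵐᵒᵖ I]
variable [AddCommGroup J] [Module k J] [Module Aᵐᵒᵖ J] [IsScalarTower k Aᵐᵒᵖ J]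

/-- The `k`-linear map `Hom_A(M, I) → Hom_A(M, J)` induced by `dc : I → J`. -/
noncomputable def postMap (dc : I →ₗ[Aᵐᵒᵖ] J) :
    (M →ₗ[Aᵐᵒᵖ] I) →ₗ[k] (M →ₗ[Aᵐᵒᵖ] J) where
  toFun f := dc ∘ₗ f
  map_add' f g := LinearMap.comp_add _ _ _
  map_smul' c f := by
    ext x
    simp only [LinearMap.comp_apply, LinearMap.smul_apply, RingHom.id_apply]
    rw [← algebraMap_smul Aᵐᵒᵖ c (f x), LinearMap.map_smul, algebraMap_smul]

end PostMap

/-- `hom(M, δ̌)`: min of `dim_k Hom(M, ď)` over injective presentations `ď` of weight `δ̌`. -/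
noncomputable def ihomWt (δc : Fin n → ℤ) : ℕ :=
  sInf {m : ℕ | ∃ (βp βm : Fin n → ℕ) (dc : IM k A e βp →ₗ[Aᵐᵒᵖ] IM k A e βm),
    HasWt βm βp δc ∧ m = finrank k (LinearMap.ker (postMap k A M dc))}

/-- `ě(M, δ̌)`: min of `dim_k Ě(M, ď)` over injective presentations `ď` of weight `δ̌`. -/
noncomputable def ieWt (δc : Fin n → ℤ) : ℕ :=
  sInf {m : ℕ | ∃ (βp βm : Fin n → ℕ) (dc : IM k A e βp →ₗ[Aᵐᵒᵖ] IM k A e βm),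
    HasWt βm βp δc ∧
      m = Module.finrank k (@HasQuotient.Quotient (M →ₗ[Aᵐᵒᵖ] IM k A e βm) _ Submodule.hasQuotient (LinearMap.range (postMap k A M dc)))}

/-- `e(δ, δ) = 0`: there are projective presentations `d, d'` of weight `δ` with
`E(d, Coker d') = 0`, i.e. the induced map on `Hom`s is surjective. -/
def EWtSelfZero (δ : Fin n → ℤ) : Prop :=
  ∃ (βm βp : Fin n → ℕ) (d : PP A e βm →ₗ[Aᵐᵒᵖ] PP A e βp)
    (βm' βp' : Fin n → ℕ) (d' : PP A e βm' →ₗ[Aᵐᵒᵖ] PP A e βp'),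
    HasWt βm βp δ ∧ HasWt βm' βp' δ ∧
      Function.Surjective (homMap k A (Coker A e d') d)

/-- `e₁, …, e_n` is a complete set of primitive orthogonal idempotents and `A` is basic:
the indecomposable projectives `eᵢA` are pairwise non-isomorphic. -/
def IsBasicSetup : Prop :=
  (∀ i, IsIdempotentElem (e i)) ∧
  (∀ i j, i ≠ j → e i * e j = 0) ∧
  (∑ i, e i = 1) ∧
  (∀ i, e i ≠ 0 ∧ ∀ f g : A, IsIdempotentElem f → IsIdempotentElem g →
      f * g = 0 → g * f = 0 → f + g = e i → f = 0 ∨ g = 0) ∧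
  (∀ i j, i ≠ j → IsEmpty (projP A e i ≃ₗ[Aᵐᵒᵖ] projP A e j))

end Defs

end TropGP

/-! The functor `M ↦ M eᵢ` is exact, so dimension vectors are additive on short exact
sequences. For `L ⊆ M₁ ⊕ M₂` the sequences `0 → L ∩ M₁ → L → π₂ L → 0` and
`0 → L ∩ M₂ → L → π₁ L → 0` show that the dimension vectors of submodules of `M₁ ⊕ M₂` are
exactly the sums of those of `M₁` and of `M₂`; additivity of `f` and the Minkowski-sum formula
follow. The same sequences make `dim L` the midpoint of `dim ((L ∩ M₁) ⊕ (L ∩ M₂))` and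
`dim (π₁ L ⊕ π₂ L)`. If `dim L` is extreme, the submodule `(L ∩ M₁) ⊕ (L ∩ M₂) ⊆ L` therefore
has the dimension vector of `L`, and since `∑ eᵢ = 1` it is all of `L`. -/

lemma Submodule.finrank_map_add_finrank_inf_ker {K V W : Type*} [DivisionRing K]
    [AddCommGroup V] [Module K V] [AddCommGroup W] [Module K W] [FiniteDimensional K V]
    (g : V →ₗ[K] W) (p : Submodule K V) :
    Module.finrank K (p.map g) + Module.finrank K ↥(p ⊓ LinearMap.ker g) = Module.finrank K p := by
  rw [← Submodule.map_comap_subtype, Submodule.finrank_map_subtype_eq, ← LinearMap.ker_comp]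
  have hrank := LinearMap.finrank_range_add_finrank_ker (g ∘ₗ p.subtype)
  rwa [LinearMap.range_comp, Submodule.range_subtype] at hrank

section ExtremePoints

open Pointwise

variable {𝕜 E : Type*} [AddCommGroup E]

lemma eq_of_mem_extremePoints_of_add_eq_two_smul [Field 𝕜] [LinearOrder 𝕜]
    [IsStrictOrderedRing 𝕜] [Module 𝕜 E] {s : Set E} {x a b : E}
    (hx : x ∈ s.extremePoints 𝕜) (ha : a ∈ s) (hb : b ∈ s) (hab : a + b = (2 : 𝕜) • x) :
    a = x :=
  hx.2 ha hb ⟨1 / 2, 1 / 2, by norm_num, by norm_num, by norm_num, by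
    rw [← smul_add, hab, smul_smul]; norm_num⟩

lemma mem_extremePoints_left_of_add_mem_extremePoints_add [Ring 𝕜] [PartialOrder 𝕜]
    [AddRightMono 𝕜] [Module 𝕜 E] {s t : Set E} {x y : E} (hx : x ∈ s) (hy : y ∈ t)
    (hxy : x + y ∈ (s + t).extremePoints 𝕜) : x ∈ s.extremePoints 𝕜 := by
  refine ⟨hx, fun x₁ h₁ x₂ h₂ hseg =>
    add_right_cancel (hxy.2 (Set.add_mem_add h₁ hy) (Set.add_mem_add h₂ hy) ?_)⟩
  simpa only [add_comm _ y] using (mem_openSegment_translate 𝕜 y).mpr hseg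

lemma mem_extremePoints_right_of_add_mem_extremePoints_add [Ring 𝕜] [PartialOrder 𝕜]
    [AddRightMono 𝕜] [Module 𝕜 E] {s t : Set E} {x y : E} (hx : x ∈ s) (hy : y ∈ t)
    (hxy : x + y ∈ (s + t).extremePoints 𝕜) : y ∈ t.extremePoints 𝕜 :=
  mem_extremePoints_left_of_add_mem_extremePoints_add hy hx (by rwa [add_comm y, add_comm t])

end ExtremePoints

instance Submodule.finiteDimensional_of_isScalarTower {k R M : Type*} [Field k] [Ring R]
    [AddCommGroup M] [Module k M] [Module R M] [SMul k R] [IsScalarTower k R M]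
    [FiniteDimensional k M] (p : Submodule R M) : FiniteDimensional k p :=
  FiniteDimensional.finiteDimensional_submodule (p.restrictScalars k)

namespace TropGP

open Module MulOpposite LinearMap Pointwise

variable (k : Type) [Field k] (A : Type) [Ring A] [Algebra k A] {n : ℕ} (e : Fin n → A)

section Exactness

variable {X Y Z : Type}
  [AddCommGroup X] [Module k X] [Module Aᵐᵒᵖ X] [IsScalarTower k Aᵐᵒᵖ X]
  [AddCommGroup Y] [Module k Y] [Module Aᵐᵒᵖ Y] [IsScalarTower k Aᵐᵒᵖ Y]
  [AddCommGroup Z] [Module k Z] [Module Aᵐᵒᵖ Z] [IsScalarTower k Aᵐᵒᵖ Z]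

lemma restrictScalars_comp_rmul (f : X →ₗ[Aᵐᵒᵖ] Y) (i : Fin n) :
    f.restrictScalars k ∘ₗ rmul k A e X i = rmul k A e Y i ∘ₗ f.restrictScalars k :=
  LinearMap.ext fun x => f.map_smul (op (e i)) x

lemma range_rmul_eq_map (f : X →ₗ[Aᵐᵒᵖ] Y) (hf : Function.Surjective f) (i : Fin n) :
    range (rmul k A e Y i) = (range (rmul k A e X i)).map (f.restrictScalars k) := by
  rw [← range_comp, restrictScalars_comp_rmul,
    range_comp_of_range_eq_top _ ((LinearMap.range_eq_top (f := f.restrictScalars k)).mpr hf)]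

lemma rmul_eq_self_of_mem_range {i : Fin n} (hi : IsIdempotentElem (e i)) {y : Y}
    (hy : y ∈ range (rmul k A e Y i)) : rmul k A e Y i y = y := by
  obtain ⟨x, rfl⟩ := hy
  change op (e i) • op (e i) • x = op (e i) • x
  rw [smul_smul, ← op_mul, hi]

lemma dimVec_congr (φ : X ≃ₗ[Aᵐᵒᵖ] Y) : dimVec k A e X = dimVec k A e Y := by
  funext i
  rw [dimVec, dimVec, range_rmul_eq_map k A e φ.toLinearMap φ.surjective]
  exact congrArg _ (LinearEquiv.finrank_map_eq (φ.restrictScalars k) _).symm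

lemma dimVec_map_of_injective {f : X →ₗ[Aᵐᵒᵖ] Y} (hf : Function.Injective f)
    (p : Submodule Aᵐᵒᵖ X) : dimVec k A e (p.map f) = dimVec k A e p :=
  (dimVec_congr k A e (Submodule.equivMapOfInjective f hf p)).symm

lemma dimVec_eq_add_of_exact [FiniteDimensional k Y] (hid : ∀ i, IsIdempotentElem (e i))
    {f : X →ₗ[Aᵐᵒᵖ] Y} {g : Y →ₗ[Aᵐᵒᵖ] Z} (hf : Function.Injective f)
    (hg : Function.Surjective g) (hfg : Function.Exact f g) :
    dimVec k A e Y = dimVec k A e X + dimVec k A e Z := by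
  funext i
  simp only [dimVec, Pi.add_apply]
  set Ye := range (rmul k A e Y i)
  have hker : Ye ⊓ ker (g.restrictScalars k) =
      (range (rmul k A e X i)).map (f.restrictScalars k) := by
    apply le_antisymm
    · rintro y ⟨hy, hgy⟩
      obtain ⟨x, rfl⟩ := (hfg y).mp hgy
      refine ⟨rmul k A e X i x, ⟨x, rfl⟩, ?_⟩
      rw [← LinearMap.comp_apply, restrictScalars_comp_rmul]
      exact rmul_eq_self_of_mem_range k A e (hid i) hy
    · rintro _ ⟨_, ⟨x, rfl⟩, rfl⟩
      exact ⟨⟨f x, (LinearMap.congr_fun (restrictScalars_comp_rmul k A e f i) x).symm⟩,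
        (hfg _).mpr ⟨_, rfl⟩⟩
  have hrank := Submodule.finrank_map_add_finrank_inf_ker (g.restrictScalars k) Ye
  rw [hker, ← range_rmul_eq_map k A e g hg,
    ← LinearEquiv.finrank_eq (Submodule.equivMapOfInjective (f.restrictScalars k) hf _)]
    at hrank
  omega

end Exactness

section Submodules

variable {M N : Type}
  [AddCommGroup M] [Module k M] [Module Aᵐᵒᵖ M] [IsScalarTower k Aᵐᵒᵖ M]
  [AddCommGroup N] [Module k N] [Module Aᵐᵒᵖ N] [IsScalarTower k Aᵐᵒᵖ N]

lemma dimVec_eq_inf_ker_add_map [FiniteDimensional k M] (hid : ∀ i, IsIdempotentElem (e i))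
    (g : M →ₗ[Aᵐᵒᵖ] N) (L : Submodule Aᵐᵒᵖ M) :
    dimVec k A e L = dimVec k A e ↥(L ⊓ ker g) + dimVec k A e ↥(L.map g) := by
  refine dimVec_eq_add_of_exact k A e hid (Submodule.inclusion_injective inf_le_left)
    (g.submoduleMap_surjective L) fun y => ⟨fun hy => ⟨⟨y, y.2, congrArg Subtype.val hy⟩, rfl⟩, ?_⟩
  rintro ⟨z, rfl⟩
  exact Subtype.ext z.2.2

lemma subsingleton_of_dimVec_eq_zero [FiniteDimensional k M] (hsum : ∑ i, e i = 1)
    (h : dimVec k A e M = 0) : Subsingleton M := by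
  suffices ∀ x : M, x = 0 from ⟨fun x y => (this x).trans (this y).symm⟩
  intro x
  have hbot : ∀ i, range (rmul k A e M i) = ⊥ := fun i =>
    Submodule.finrank_eq_zero.mp (Nat.cast_eq_zero.mp (congrFun h i))
  calc x = op (∑ i, e i) • x := by rw [hsum, op_one, one_smul]
    _ = ∑ i, rmul k A e M i x := by rw [Finset.op_sum, Finset.sum_smul]; rfl
    _ = 0 := Finset.sum_eq_zero fun i _ => (Submodule.mem_bot k).mp (hbot i ▸ mem_range_self _ x)

lemma eq_of_le_of_dimVec_eq [FiniteDimensional k M] (hid : ∀ i, IsIdempotentElem (e i))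
    (hsum : ∑ i, e i = 1) {p q : Submodule Aᵐᵒᵖ M} (hpq : p ≤ q)
    (h : dimVec k A e p = dimVec k A e q) : p = q := by
  have hq := dimVec_eq_inf_ker_add_map k A e hid p.mkQ q
  rw [Submodule.ker_mkQ, inf_eq_right.mpr hpq, ← h, left_eq_add] at hq
  have := subsingleton_of_dimVec_eq_zero k A e hsum hq
  rw [Submodule.subsingleton_iff_eq_bot, ← LinearMap.le_ker_iff_map, Submodule.ker_mkQ] at this
  exact le_antisymm hpq this

end Submodules

section DimensionVectors

variable {M N : Type}
  [AddCommGroup M] [Module k M] [Module Aᵐᵒᵖ M] [IsScalarTower k Aᵐᵒᵖ M]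
  [AddCommGroup N] [Module k N] [Module Aᵐᵒᵖ N] [IsScalarTower k Aᵐᵒᵖ N]

lemma dimVecR_eq_cast : dimVecR k A e M = (Int.castAddHom ℝ).compLeft (Fin n) (dimVec k A e M) :=
  funext fun _ => (Int.cast_natCast _).symm

lemma dimVecR_eq_dimVecR_iff :
    dimVecR k A e M = dimVecR k A e N ↔ dimVec k A e M = dimVec k A e N := by
  simp only [funext_iff, dimVecR, dimVec, Nat.cast_inj]

variable (M) in
def dimVecs : Set (Fin n → ℤ) := Set.range fun L : Submodule Aᵐᵒᵖ M => dimVec k A e L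

lemma dimVecs_finite [FiniteDimensional k M] : (dimVecs k A e M).Finite := by
  refine (Set.Finite.pi fun _ => Set.finite_Icc (0 : ℤ) (finrank k M)).subset ?_
  rintro _ ⟨L, rfl⟩ i -
  exact ⟨Nat.cast_nonneg _, Nat.cast_le.mpr
    ((Submodule.finrank_le _).trans (Submodule.finrank_le (L.restrictScalars k)))⟩

lemma tropF_eq_sSup_image (δ : Fin n → ℤ) :
    tropF k A e M δ = sSup (pz δ '' dimVecs k A e M) := by
  rw [tropF, dimVecs, ← Set.range_comp]
  rfl

lemma newton_eq_convexHull_image :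
    newton k A e M = convexHull ℝ ((Int.castAddHom ℝ).compLeft (Fin n) '' dimVecs k A e M) := by
  rw [newton, dimVecs, ← Set.range_comp]
  congr 1
  ext x
  simp only [Set.mem_ofPred_eq, Set.mem_range, Function.comp_apply, ← dimVecR_eq_cast, eq_comm]

lemma dimVecR_mem_newton (L : Submodule Aᵐᵒᵖ M) : dimVecR k A e L ∈ newton k A e M :=
  subset_convexHull ℝ _ ⟨L, rfl⟩

end DimensionVectors

section Prod

variable {M₁ M₂ : Type}
  [AddCommGroup M₁] [Module k M₁] [Module Aᵐᵒᵖ M₁] [IsScalarTower k Aᵐᵒᵖ M₁]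
  [AddCommGroup M₂] [Module k M₂] [Module Aᵐᵒᵖ M₂] [IsScalarTower k Aᵐᵒᵖ M₂]

lemma dimVec_inf_range_inl (L : Submodule Aᵐᵒᵖ (M₁ × M₂)) :
    dimVec k A e ↥(L ⊓ range (inl Aᵐᵒᵖ M₁ M₂)) = dimVec k A e ↥(L.comap (inl Aᵐᵒᵖ M₁ M₂)) := by
  rw [inf_comm, ← Submodule.map_comap_eq]
  exact dimVec_map_of_injective k A e inl_injective _

lemma dimVec_inf_range_inr (L : Submodule Aᵐᵒᵖ (M₁ × M₂)) :
    dimVec k A e ↥(L ⊓ range (inr Aᵐᵒᵖ M₁ M₂)) = dimVec k A e ↥(L.comap (inr Aᵐᵒᵖ M₁ M₂)) := by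
  rw [inf_comm, ← Submodule.map_comap_eq]
  exact dimVec_map_of_injective k A e inr_injective _

lemma inf_range_inl_sup_inf_range_inr (L : Submodule Aᵐᵒᵖ (M₁ × M₂)) :
    L ⊓ range (inl Aᵐᵒᵖ M₁ M₂) ⊔ L ⊓ range (inr Aᵐᵒᵖ M₁ M₂) =
      (L.comap (inl Aᵐᵒᵖ M₁ M₂)).prod (L.comap (inr Aᵐᵒᵖ M₁ M₂)) := by
  rw [prod_eq_sup_map, Submodule.map_comap_eq, Submodule.map_comap_eq, inf_comm, inf_comm L]

variable [FiniteDimensional k M₁] [FiniteDimensional k M₂]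

lemma dimVec_eq_comap_inl_add_map_snd (hid : ∀ i, IsIdempotentElem (e i))
    (L : Submodule Aᵐᵒᵖ (M₁ × M₂)) :
    dimVec k A e L =
      dimVec k A e ↥(L.comap (inl Aᵐᵒᵖ M₁ M₂)) + dimVec k A e ↥(L.map (snd Aᵐᵒᵖ M₁ M₂)) := by
  rw [dimVec_eq_inf_ker_add_map k A e hid (snd Aᵐᵒᵖ M₁ M₂) L, ker_snd, dimVec_inf_range_inl]

lemma dimVec_eq_comap_inr_add_map_fst (hid : ∀ i, IsIdempotentElem (e i))
    (L : Submodule Aᵐᵒᵖ (M₁ × M₂)) :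
    dimVec k A e L =
      dimVec k A e ↥(L.comap (inr Aᵐᵒᵖ M₁ M₂)) + dimVec k A e ↥(L.map (fst Aᵐᵒᵖ M₁ M₂)) := by
  rw [dimVec_eq_inf_ker_add_map k A e hid (fst Aᵐᵒᵖ M₁ M₂) L, ker_fst, dimVec_inf_range_inr]

lemma dimVec_prod (hid : ∀ i, IsIdempotentElem (e i)) (p : Submodule Aᵐᵒᵖ M₁)
    (q : Submodule Aᵐᵒᵖ M₂) : dimVec k A e ↥(p.prod q) = dimVec k A e p + dimVec k A e q := by
  rw [dimVec_eq_comap_inl_add_map_snd k A e hid, Submodule.prod_comap_inl, Submodule.prod_map_snd]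

lemma dimVecs_prod (hid : ∀ i, IsIdempotentElem (e i)) :
    dimVecs k A e (M₁ × M₂) = dimVecs k A e M₁ + dimVecs k A e M₂ := by
  apply subset_antisymm
  · rintro _ ⟨L, rfl⟩
    exact ⟨_, ⟨_, rfl⟩, _, ⟨_, rfl⟩, (dimVec_eq_comap_inl_add_map_snd k A e hid L).symm⟩
  · rintro _ ⟨_, ⟨p, rfl⟩, _, ⟨q, rfl⟩, rfl⟩
    exact ⟨p.prod q, dimVec_prod k A e hid p q⟩

theorem tropF_prod (hid : ∀ i, IsIdempotentElem (e i)) (δ : Fin n → ℤ) :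
    tropF k A e (M₁ × M₂) δ = tropF k A e M₁ δ + tropF k A e M₂ δ := by
  let φ : (Fin n → ℤ) →+ ℤ := AddMonoidHom.mk' (pz δ) fun β γ => by
    simp only [pz, Pi.add_apply, mul_add, Finset.sum_add_distrib]
  simp only [tropF_eq_sSup_image]
  change sSup (φ '' _) = sSup (φ '' _) + sSup (φ '' _)
  rw [dimVecs_prod k A e hid, Set.image_add]
  exact csSup_add (Set.range_nonempty _ |>.image φ) ((dimVecs_finite k A e).image φ).bddAbove
    (Set.range_nonempty _ |>.image φ) ((dimVecs_finite k A e).image φ).bddAbove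

theorem newton_prod (hid : ∀ i, IsIdempotentElem (e i)) :
    newton k A e (M₁ × M₂) = newton k A e M₁ + newton k A e M₂ := by
  simp only [newton_eq_convexHull_image, dimVecs_prod k A e hid, Set.image_add, convexHull_add]

lemma dimVecR_comap_inl_add_comap_inr_of_eq_sup (hid : ∀ i, IsIdempotentElem (e i))
    {L : Submodule Aᵐᵒᵖ (M₁ × M₂)}
    (hL : L = L ⊓ range (inl Aᵐᵒᵖ M₁ M₂) ⊔ L ⊓ range (inr Aᵐᵒᵖ M₁ M₂)) :
    dimVecR k A e ↥(L.comap (inl Aᵐᵒᵖ M₁ M₂)) + dimVecR k A e ↥(L.comap (inr Aᵐᵒᵖ M₁ M₂)) =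
      dimVecR k A e L := by
  rw [inf_range_inl_sup_inf_range_inr] at hL
  simp only [dimVecR_eq_cast, ← map_add]
  rw [← dimVec_prod k A e hid, ← hL]

theorem eq_inf_range_inl_sup_inf_range_inr (hid : ∀ i, IsIdempotentElem (e i))
    (hsum : ∑ i, e i = 1) {L : Submodule Aᵐᵒᵖ (M₁ × M₂)}
    (hL : dimVecR k A e L ∈ (newton k A e (M₁ × M₂)).extremePoints ℝ) :
    L = L ⊓ range (inl Aᵐᵒᵖ M₁ M₂) ⊔ L ⊓ range (inr Aᵐᵒᵖ M₁ M₂) := by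
  set P := L.comap (inl Aᵐᵒᵖ M₁ M₂)
  set Q := L.comap (inr Aᵐᵒᵖ M₁ M₂)
  set P' := L.map (fst Aᵐᵒᵖ M₁ M₂)
  set Q' := L.map (snd Aᵐᵒᵖ M₁ M₂)
  have hmid : dimVec k A e ↥(P.prod Q) + dimVec k A e ↥(P'.prod Q') =
      dimVec k A e L + dimVec k A e L := by
    calc _ = (dimVec k A e P + dimVec k A e Q') + (dimVec k A e Q + dimVec k A e P') := by
          rw [dimVec_prod k A e hid, dimVec_prod k A e hid]; abel
      _ = _ := by
          rw [← dimVec_eq_comap_inl_add_map_snd k A e hid,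
            ← dimVec_eq_comap_inr_add_map_fst k A e hid]
  have hPQ : dimVecR k A e ↥(P.prod Q) = dimVecR k A e L := by
    refine eq_of_mem_extremePoints_of_add_eq_two_smul hL (dimVecR_mem_newton k A e _)
      (dimVecR_mem_newton k A e (P'.prod Q')) ?_
    rw [two_smul, dimVecR_eq_cast, dimVecR_eq_cast, dimVecR_eq_cast, ← map_add, ← map_add, hmid]
  have hle : P.prod Q ≤ L := by
    rw [← inf_range_inl_sup_inf_range_inr]
    exact sup_le inf_le_left inf_le_left
  rw [inf_range_inl_sup_inf_range_inr]
  exact (eq_of_le_of_dimVec_eq k A e hid hsum hle ((dimVecR_eq_dimVecR_iff k A e).mp hPQ)).symm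

end Prod

end TropGP

open TropGP Module MulOpposite Pointwise

theorem statement7_general (k : Type) [Field k]
    (A : Type) [Ring A] [Algebra k A]
    {n : ℕ} (e : Fin n → A) (hA : IsBasicSetup A e)
    (M₁ M₂ : Type) [AddCommGroup M₁] [Module k M₁] [Module Aᵐᵒᵖ M₁]
    [IsScalarTower k Aᵐᵒᵖ M₁] [FiniteDimensional k M₁]
    [AddCommGroup M₂] [Module k M₂] [Module Aᵐᵒᵖ M₂]
    [IsScalarTower k Aᵐᵒᵖ M₂] [FiniteDimensional k M₂] :
    (∀ δ : Fin n → ℤ,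
      tropF k A e (M₁ × M₂) δ = tropF k A e M₁ δ + tropF k A e M₂ δ) ∧
    newton k A e (M₁ × M₂) = newton k A e M₁ + newton k A e M₂ ∧
    (∀ L : Submodule Aᵐᵒᵖ (M₁ × M₂),
      dimVecR k A e L ∈ Set.extremePoints ℝ (newton k A e (M₁ × M₂)) →
      L = (L ⊓ LinearMap.range (LinearMap.inl Aᵐᵒᵖ M₁ M₂)) ⊔
            (L ⊓ LinearMap.range (LinearMap.inr Aᵐᵒᵖ M₁ M₂)) ∧
      dimVecR k A e (L ⊓ LinearMap.range (LinearMap.inl Aᵐᵒᵖ M₁ M₂) : Submodule Aᵐᵒᵖ (M₁ × M₂))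
        ∈ Set.extremePoints ℝ (newton k A e M₁) ∧
      dimVecR k A e (L ⊓ LinearMap.range (LinearMap.inr Aᵐᵒᵖ M₁ M₂) : Submodule Aᵐᵒᵖ (M₁ × M₂))
        ∈ Set.extremePoints ℝ (newton k A e M₂)) := by
  obtain ⟨hid, -, hsum, -, -⟩ := hA
  refine ⟨tropF_prod k A e hid, newton_prod k A e hid, fun L hL => ?_⟩
  have hdecomp := eq_inf_range_inl_sup_inf_range_inr k A e hid hsum hL
  have hP := dimVecR_mem_newton k A e (L.comap (LinearMap.inl Aᵐᵒᵖ M₁ M₂))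
  have hQ := dimVecR_mem_newton k A e (L.comap (LinearMap.inr Aᵐᵒᵖ M₁ M₂))
  rw [newton_prod k A e hid,
    ← dimVecR_comap_inl_add_comap_inr_of_eq_sup k A e hid hdecomp] at hL
  rw [(dimVecR_eq_dimVecR_iff k A e).mpr (dimVec_inf_range_inl k A e L),
    (dimVecR_eq_dimVecR_iff k A e).mpr (dimVec_inf_range_inr k A e L)]
  exact ⟨hdecomp, mem_extremePoints_left_of_add_mem_extremePoints_add hP hQ hL,
    mem_extremePoints_right_of_add_mem_extremePoints_add hP hQ hL⟩

/-- `f_{M₁⊕M₂} = f_{M₁} + f_{M₂}`, hence `N(M₁⊕M₂)` is the Minkowski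
sum `N(M₁) + N(M₂)`; moreover a submodule `L ⊆ M₁⊕M₂` whose dimension vector is an
extreme point of `N(M₁⊕M₂)` decomposes as `L = (L∩M₁) ⊕ (L∩M₂)` and `dim (L∩Mᵢ)` is an
extreme point of `N(Mᵢ)`. -/
theorem statement7 (k : Type) [Field k] [IsAlgClosed k] [CharZero k]
    (A : Type) [Ring A] [Algebra k A] [FiniteDimensional k A]
    {n : ℕ} (e : Fin n → A) (hA : IsBasicSetup A e)
    (M₁ M₂ : Type) [AddCommGroup M₁] [Module k M₁] [Module Aᵐᵒᵖ M₁]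
    [IsScalarTower k Aᵐᵒᵖ M₁] [FiniteDimensional k M₁]
    [AddCommGroup M₂] [Module k M₂] [Module Aᵐᵒᵖ M₂]
    [IsScalarTower k Aᵐᵒᵖ M₂] [FiniteDimensional k M₂] :
    (∀ δ : Fin n → ℤ,
      tropF k A e (M₁ × M₂) δ = tropF k A e M₁ δ + tropF k A e M₂ δ) ∧
    newton k A e (M₁ × M₂) = newton k A e M₁ + newton k A e M₂ ∧
    (∀ L : Submodule Aᵐᵒᵖ (M₁ × M₂),
      dimVecR k A e L ∈ Set.extremePoints ℝ (newton k A e (M₁ × M₂)) →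
      L = (L ⊓ LinearMap.range (LinearMap.inl Aᵐᵒᵖ M₁ M₂)) ⊔
            (L ⊓ LinearMap.range (LinearMap.inr Aᵐᵒᵖ M₁ M₂)) ∧
      dimVecR k A e (L ⊓ LinearMap.range (LinearMap.inl Aᵐᵒᵖ M₁ M₂) : Submodule Aᵐᵒᵖ (M₁ × M₂))
        ∈ Set.extremePoints ℝ (newton k A e M₁) ∧
      dimVecR k A e (L ⊓ LinearMap.range (LinearMap.inr Aᵐᵒᵖ M₁ M₂) : Submodule Aᵐᵒᵖ (M₁ × M₂))
        ∈ Set.extremePoints ℝ (newton k A e M₂)) :=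
  statement7_general k A e hA M₁ M₂
end

section
/- Let d be a rigid projective presentation (E(d, Coker d) = 0), set C := Coker d, and let M be a finite-dimensional right A-module with dim_k Hom_A(C, M) = 1. Let L be the image of a nonzero homomorphism C → M. Then End_A(L) = k (L is Schur). If moreover there is an exact sequence 0 → M → I₀ → I₁ with I₀, I₁ injective such that the induced map Hom_A(M, I₀) → Hom_A(M, I₁) is surjective, then also Ext¹_A(L, L) = 0 (L is real Schur). -/
open TropGP Module MulOpposite

/-- `Ext¹_A(L, L) = 0`: every self-extension `0 → L → E → L → 0` splits. -/
def Ext1SelfVanishes (A : Type) [Ring A] (L : Type) [AddCommGroup L] [Module Aᵐᵒᵖ L] : Prop :=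
  ∀ (E : Type) (igE : AddCommGroup E), letI := igE;
  ∀ (imE : Module Aᵐᵒᵖ E), letI := imE;
  ∀ (ι : L →ₗ[Aᵐᵒᵖ] E) (π : E →ₗ[Aᵐᵒᵖ] L),
    Function.Injective ι → Function.Surjective π → LinearMap.range ι = LinearMap.ker π →
    ∃ σ : L →ₗ[Aᵐᵒᵖ] E, π ∘ₗ σ = LinearMap.id

/-! The image `L` of `g` is a quotient of `C = Coker d`, so the rigidity of `d` gives
`E(d, L) = 0`; as `C` is presented by projectives, every map `C → L` then lifts along any
self-extension `0 → L → E → L → 0`. The injective copresentation of `M` gives `Ext¹(N, M) = 0`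
for every submodule `N ⊆ M`, so the inclusion `L ⊆ M` extends to `u : E → M`. If `t : C → E`
lifts `C ↠ L`, then `u ∘ t : C → M` is a multiple of `g` because `Hom(C, M)` is a line, hence
`t` kills the kernel of `C ↠ L` and descends to a section of `E ↠ L`. The same one-dimensionality
makes every endomorphism of `L` a scalar. -/

section LinearMapFactor

variable {R : Type*} [Ring R] {X Y Z : Type*} [AddCommGroup X] [Module R X]
  [AddCommGroup Y] [Module R Y] [AddCommGroup Z] [Module R Z]

lemma LinearMap.exists_comp_eq_of_surjective_of_ker_le (p : X →ₗ[R] Y)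
    (hp : Function.Surjective p) (f : X →ₗ[R] Z) (hf : LinearMap.ker p ≤ LinearMap.ker f) :
    ∃ h : Y →ₗ[R] Z, h ∘ₗ p = f :=
  ⟨(LinearMap.ker p).liftQ f hf ∘ₗ (p.quotKerEquivOfSurjective hp).symm.toLinearMap, by
    ext x
    simp⟩

lemma LinearMap.exists_comp_eq_of_injective_of_range_le (j : Y →ₗ[R] Z)
    (hj : Function.Injective j) (f : X →ₗ[R] Z) (hf : LinearMap.range f ≤ LinearMap.range j) :
    ∃ h : X →ₗ[R] Y, j ∘ₗ h = f :=
  ⟨(LinearEquiv.ofInjective j hj).symm.toLinearMap ∘ₗ f.codRestrict _ fun x => hf ⟨x, rfl⟩, by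
    ext x
    simp⟩

end LinearMapFactor

section Extensions

universe v

variable {R : Type*} [Ring R]

lemma exists_comp_eq_of_projective_of_surjective {P Q C N : Type*}
    [AddCommGroup P] [Module R P] [Module.Projective R P] [AddCommGroup Q] [Module R Q]
    [AddCommGroup C] [Module R C] [AddCommGroup N] [Module R N]
    (d : P →ₗ[R] Q) (hd : ∀ h : P →ₗ[R] C, ∃ γ : Q →ₗ[R] C, γ ∘ₗ d = h)
    (q : C →ₗ[R] N) (hq : Function.Surjective q) (h : P →ₗ[R] N) :
    ∃ γ : Q →ₗ[R] N, γ ∘ₗ d = h := by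
  obtain ⟨h', rfl⟩ := Module.projective_lifting_property q h hq
  obtain ⟨γ, rfl⟩ := hd h'
  exact ⟨q ∘ₗ γ, rfl⟩

/-- Read `hd` as `E(d, K) = 0`: pulled back to `Coker d` along any `f`, an extension of `N`
by `K` splits. -/
lemma exists_comp_eq_of_cokernel_of_projective {P Q K E N : Type*}
    [AddCommGroup P] [Module R P] [AddCommGroup Q] [Module R Q] [Module.Projective R Q]
    [AddCommGroup K] [Module R K] [AddCommGroup E] [Module R E] [AddCommGroup N] [Module R N]
    (d : P →ₗ[R] Q) (hd : ∀ h : P →ₗ[R] K, ∃ γ : Q →ₗ[R] K, γ ∘ₗ d = h)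
    (ι : K →ₗ[R] E) (π : E →ₗ[R] N) (hι : Function.Injective ι) (hπ : Function.Surjective π)
    (hexact : Function.Exact ι π) (f : (Q ⧸ LinearMap.range d) →ₗ[R] N) :
    ∃ t : (Q ⧸ LinearMap.range d) →ₗ[R] E, π ∘ₗ t = f := by
  obtain ⟨α, hα⟩ := Module.projective_lifting_property π (f ∘ₗ (LinearMap.range d).mkQ) hπ
  have hαd : LinearMap.range (α ∘ₗ d) ≤ LinearMap.range ι := by
    rintro _ ⟨y, rfl⟩
    rw [← hexact.linearMap_ker_eq, LinearMap.mem_ker, ← LinearMap.comp_apply π,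
      ← LinearMap.comp_assoc, hα]
    simp [(Submodule.Quotient.mk_eq_zero _).mpr (LinearMap.mem_range_self d y)]
  obtain ⟨b, hb⟩ := LinearMap.exists_comp_eq_of_injective_of_range_le ι hι _ hαd
  obtain ⟨γ, rfl⟩ := hd b
  obtain ⟨t, ht⟩ := LinearMap.exists_comp_eq_of_surjective_of_ker_le (LinearMap.range d).mkQ
    (Submodule.mkQ_surjective _) (α - ι ∘ₗ γ) <| by
      rw [Submodule.ker_mkQ]
      rintro _ ⟨y, rfl⟩
      simpa [sub_eq_zero] using (LinearMap.congr_fun hb y).symm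
  refine ⟨t, (Submodule.mkQ_surjective (LinearMap.range d)).injective_linearMapComp_right ?_⟩
  change (π ∘ₗ t) ∘ₗ _ = f ∘ₗ _
  rw [LinearMap.comp_assoc, ht, LinearMap.comp_sub, hα, ← LinearMap.comp_assoc,
    hexact.linearMap_comp_eq_zero, LinearMap.zero_comp, sub_zero]

lemma exists_comp_eq_of_injective_copresentation {M I₀ I₁ K E : Type v}
    [AddCommGroup M] [Module R M] [AddCommGroup I₀] [Module R I₀] [Module.Injective R I₀]
    [AddCommGroup I₁] [Module R I₁] [Module.Injective R I₁]
    [AddCommGroup K] [Module R K] [AddCommGroup E] [Module R E]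
    (ι₀ : M →ₗ[R] I₀) (ψ : I₀ →ₗ[R] I₁) (hι₀ : Function.Injective ι₀)
    (hexact₀ : LinearMap.range ι₀ = LinearMap.ker ψ)
    (hψ : Function.Surjective fun f : M →ₗ[R] I₀ => ψ ∘ₗ f) (N : Submodule R M)
    (ι : K →ₗ[R] E) (π : E →ₗ[R] N) (hι : Function.Injective ι) (hπ : Function.Surjective π)
    (hexact : Function.Exact ι π) (f : K →ₗ[R] M) :
    ∃ u : E →ₗ[R] M, u ∘ₗ ι = f := by
  obtain ⟨U, hU⟩ := Module.Injective.out ι hι (ι₀ ∘ₗ f)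
  have hψι₀ : ψ ∘ₗ ι₀ = 0 := (LinearMap.exact_iff.mpr hexact₀.symm).linearMap_comp_eq_zero
  obtain ⟨V, hV⟩ := LinearMap.exists_comp_eq_of_surjective_of_ker_le π hπ (ψ ∘ₗ U) <| by
    rw [hexact.linearMap_ker_eq]
    rintro _ ⟨x, rfl⟩
    simp [hU, ← LinearMap.comp_apply ψ ι₀, hψι₀]
  obtain ⟨V', hV'⟩ := Module.Injective.out N.subtype N.injective_subtype V
  simp only [Submodule.subtype_apply] at hV'
  obtain ⟨W, hW⟩ := hψ V'
  set T := U - W ∘ₗ N.subtype ∘ₗ π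
  have hT : LinearMap.range T ≤ LinearMap.range ι₀ := by
    rintro _ ⟨x, rfl⟩
    rw [hexact₀, LinearMap.mem_ker]
    simp [T, ← LinearMap.comp_apply ψ W, hW, hV', ← LinearMap.comp_apply ψ U, ← hV]
  obtain ⟨u, hu⟩ := LinearMap.exists_comp_eq_of_injective_of_range_le ι₀ hι₀ T hT
  refine ⟨u, LinearMap.ext fun x => hι₀ ?_⟩
  simp [← LinearMap.comp_apply ι₀ u, hu, T, hU, hexact.apply_apply_eq_zero]

end Extensions

section Splitting

variable {R : Type*} [Ring R] {C M E : Type*} [AddCommGroup C] [Module R C]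
  [AddCommGroup M] [Module R M] [AddCommGroup E] [Module R E]

/-- `u ∘ t` kills `ker g`, and `u` is injective on `ι (range g) ⊇ t (ker g)`; so `t` descends
along `C ↠ range g` to a section of `π`. -/
lemma exists_section_of_ker_le_ker (g : C →ₗ[R] M)
    (hg : ∀ φ : C →ₗ[R] M, LinearMap.ker g ≤ LinearMap.ker φ)
    (ι : LinearMap.range g →ₗ[R] E) (π : E →ₗ[R] LinearMap.range g) (hexact : Function.Exact ι π)
    {t : C →ₗ[R] E} (ht : π ∘ₗ t = g.rangeRestrict)
    {u : E →ₗ[R] M} (hu : u ∘ₗ ι = (LinearMap.range g).subtype) :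
    ∃ σ : LinearMap.range g →ₗ[R] E, π ∘ₗ σ = LinearMap.id := by
  have hker : LinearMap.ker g.rangeRestrict ≤ LinearMap.ker t := by
    rw [LinearMap.ker_rangeRestrict]
    intro x hx
    have hπt : π (t x) = 0 := by
      rw [← LinearMap.comp_apply, ht]
      exact Subtype.ext hx
    obtain ⟨l, hl⟩ := (hexact (t x)).mp hπt
    have hl0 : l = 0 := Subtype.ext <|
      calc (l : M) = u (ι l) := (LinearMap.congr_fun hu l).symm
        _ = u (t x) := by rw [hl]
        _ = 0 := hg (u ∘ₗ t) hx
    simp [← hl, hl0]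
  obtain ⟨σ, hσ⟩ := LinearMap.exists_comp_eq_of_surjective_of_ker_le g.rangeRestrict
    g.surjective_rangeRestrict t hker
  refine ⟨σ, g.surjective_rangeRestrict.injective_linearMapComp_right ?_⟩
  change (π ∘ₗ σ) ∘ₗ _ = LinearMap.id ∘ₗ _
  rw [LinearMap.comp_assoc, hσ, ht, LinearMap.id_comp]

end Splitting

namespace TropGP

section Projective

variable (A : Type) [Ring A] {n : ℕ} (e : Fin n → A)

lemma projective_projP {i : Fin n} (he : IsIdempotentElem (e i)) :
    Module.Projective Aᵐᵒᵖ (projP A e i) := by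
  have : Module.Projective Aᵐᵒᵖ A := .of_equiv' (opLinearEquiv Aᵐᵒᵖ).symm
  have hmem (x : A) : e i * x ∈ projP A e i :=
    Submodule.mem_span_singleton.mpr ⟨op x, by rw [smul_eq_mul_unop, unop_op]⟩
  refine .of_split (projP A e i).subtype ((LinearMap.mulLeft Aᵐᵒᵖ (e i)).codRestrict _ hmem) ?_
  ext ⟨x, hx⟩
  obtain ⟨b, rfl⟩ := Submodule.mem_span_singleton.mp hx
  change e i * (e i * b.unop) = e i * b.unop
  rw [← mul_assoc, he.eq]

lemma projective_PP (he : ∀ i, IsIdempotentElem (e i)) (β : Fin n → ℕ) :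
    Module.Projective Aᵐᵒᵖ (PP A e β) := by
  have (i : Fin n) : Module.Projective Aᵐᵒᵖ (Fin (β i) → projP A e i) :=
    have := projective_projP A e (he i)
    .of_equiv' (DFinsupp.linearEquivFunOnFintype (R := Aᵐᵒᵖ))
  exact .of_equiv' (DFinsupp.linearEquivFunOnFintype (R := Aᵐᵒᵖ))

end Projective

lemma exists_eq_smul_id_of_forall_eq_smul (k A : Type) [Field k] [Ring A] [Algebra k A]
    {C M : Type} [AddCommGroup C] [Module Aᵐᵒᵖ C] [AddCommGroup M] [Module k M]
    [Module Aᵐᵒᵖ M] [IsScalarTower k Aᵐᵒᵖ M] (g : C →ₗ[Aᵐᵒᵖ] M)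
    (hg : ∀ φ : C →ₗ[Aᵐᵒᵖ] M, ∃ c : k, c • g = φ)
    (φ : LinearMap.range g →ₗ[Aᵐᵒᵖ] LinearMap.range g) :
    ∃ c : k, φ = c • LinearMap.id := by
  obtain ⟨c, hc⟩ := hg ((LinearMap.range g).subtype ∘ₗ φ ∘ₗ g.rangeRestrict)
  refine ⟨c, LinearMap.ext fun l => ?_⟩
  obtain ⟨x, rfl⟩ := g.surjective_rangeRestrict l
  exact Subtype.ext (LinearMap.congr_fun hc x).symm

end TropGP

theorem statement15_general (k : Type) [Field k]
    (A : Type) [Ring A] [Algebra k A]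
    {n : ℕ} (e : Fin n → A) (hA : IsBasicSetup A e)
    (βm βp : Fin n → ℕ) (d : PP A e βm →ₗ[Aᵐᵒᵖ] PP A e βp)
    (hrig : Function.Surjective (homMap k A (Coker A e d) d))
    (M : Type) [AddCommGroup M] [Module k M] [Module Aᵐᵒᵖ M]
    [IsScalarTower k Aᵐᵒᵖ M]
    (hdim : finrank k (Coker A e d →ₗ[Aᵐᵒᵖ] M) = 1)
    (g : Coker A e d →ₗ[Aᵐᵒᵖ] M) (hg : g ≠ 0) :
    (∀ φ : LinearMap.range g →ₗ[Aᵐᵒᵖ] LinearMap.range g, ∃ c : k, φ = c • LinearMap.id) ∧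
    ((∃ (I₀ I₁ : Type) (ig₀ : AddCommGroup I₀) (ig₁ : AddCommGroup I₁),
        letI := ig₀; letI := ig₁;
        ∃ (im₀ : Module Aᵐᵒᵖ I₀) (im₁ : Module Aᵐᵒᵖ I₁),
          letI := im₀; letI := im₁;
          Module.Injective Aᵐᵒᵖ I₀ ∧ Module.Injective Aᵐᵒᵖ I₁ ∧
          ∃ (ι : M →ₗ[Aᵐᵒᵖ] I₀) (ψ : I₀ →ₗ[Aᵐᵒᵖ] I₁),
            Function.Injective ι ∧ LinearMap.range ι = LinearMap.ker ψ ∧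
            Function.Surjective (fun f : M →ₗ[Aᵐᵒᵖ] I₀ => ψ ∘ₗ f)) →
      Ext1SelfVanishes A (LinearMap.range g)) := by
  have hspan : ∀ φ : Coker A e d →ₗ[Aᵐᵒᵖ] M, ∃ c : k, c • g = φ :=
    (finrank_eq_one_iff_of_nonzero' g hg).mp hdim
  refine ⟨exists_eq_smul_id_of_forall_eq_smul k A g hspan, ?_⟩
  rintro ⟨I₀, I₁, _, _, _, _, _, _, ι₀, ψ, hι₀, hexact₀, hψ⟩ E _ _ ι π hι hπ hexact
  have hexact' : Function.Exact ι π := LinearMap.exact_iff.mpr hexact.symm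
  have := projective_PP A e hA.1
  obtain ⟨t, ht⟩ := exists_comp_eq_of_cokernel_of_projective d
    (exists_comp_eq_of_projective_of_surjective d hrig _ g.surjective_rangeRestrict)
    ι π hι hπ hexact' g.rangeRestrict
  obtain ⟨u, hu⟩ := exists_comp_eq_of_injective_copresentation ι₀ ψ hι₀ hexact₀ hψ _
    ι π hι hπ hexact' (LinearMap.range g).subtype
  refine exists_section_of_ker_le_ker g (fun φ => ?_) ι π hexact' ht hu
  obtain ⟨c, rfl⟩ := hspan φ
  exact fun x hx => by simp_all

/-- Let `d` be a rigid presentation with cokernel `C` and let `M`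
satisfy `dim_k Hom_A(C,M) = 1`.  The image `L` of a nonzero homomorphism `C → M` is
Schur; if moreover `M` admits an injective copresentation `0 → M → I₀ → I₁` with the
induced map `Hom(M,I₀) → Hom(M,I₁)` surjective, then `L` is real Schur. -/
theorem statement15 (k : Type) [Field k] [IsAlgClosed k] [CharZero k]
    (A : Type) [Ring A] [Algebra k A] [FiniteDimensional k A]
    {n : ℕ} (e : Fin n → A) (hA : IsBasicSetup A e)
    (βm βp : Fin n → ℕ) (d : PP A e βm →ₗ[Aᵐᵒᵖ] PP A e βp)
    (hrig : Function.Surjective (homMap k A (Coker A e d) d))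
    (M : Type) [AddCommGroup M] [Module k M] [Module Aᵐᵒᵖ M]
    [IsScalarTower k Aᵐᵒᵖ M] [FiniteDimensional k M]
    (hdim : finrank k (Coker A e d →ₗ[Aᵐᵒᵖ] M) = 1)
    (g : Coker A e d →ₗ[Aᵐᵒᵖ] M) (hg : g ≠ 0) :
    (∀ φ : LinearMap.range g →ₗ[Aᵐᵒᵖ] LinearMap.range g, ∃ c : k, φ = c • LinearMap.id) ∧
    ((∃ (I₀ I₁ : Type) (ig₀ : AddCommGroup I₀) (ig₁ : AddCommGroup I₁),
        letI := ig₀; letI := ig₁;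
        ∃ (im₀ : Module Aᵐᵒᵖ I₀) (im₁ : Module Aᵐᵒᵖ I₁),
          letI := im₀; letI := im₁;
          Module.Injective Aᵐᵒᵖ I₀ ∧ Module.Injective Aᵐᵒᵖ I₁ ∧
          ∃ (ι : M →ₗ[Aᵐᵒᵖ] I₀) (ψ : I₀ →ₗ[Aᵐᵒᵖ] I₁),
            Function.Injective ι ∧ LinearMap.range ι = LinearMap.ker ψ ∧
            Function.Surjective (fun f : M →ₗ[Aᵐᵒᵖ] I₀ => ψ ∘ₗ f)) →
      Ext1SelfVanishes A (LinearMap.range g)) :=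
  statement15_general k A e hA βm βp d hrig M hdim g hg
end
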